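/- arXiv:1403.3106 — 4 statements merged into one kernel-verified Lean document; each statement's English description precedes it below -/
import Mathlib

section
/- Suppose d is a compatible left-invariant metric on a topological group G such that some ball B_ε = {g ∈ G : d(g,1) ≤ ε} generates G. Define ∂(f,h) = inf{ Σ_{i=1}^n d(g_i,1) : g_i ∈ B_ε and f = h g_1 ⋯ g_n }. Then ∂ is a compatible left-invariant metric on G which is quasi-isometric to the word metric ρ_{B_ε}; in fact (ε/4)·ρ_{B_ε}(f,h) − (1 + ε/4) ≤ ∂(f,h) ≤ ε·ρ_{B_ε}(f,h) for all f,h ∈ G. -/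
open Filter Topology
open scoped Pointwise

/-- A (plain) metric given as a distance function. -/
def IsMetric {G : Type*} (d : G → G → ℝ) : Prop :=
  (∀ x y, d x y = 0 ↔ x = y) ∧ (∀ x y, d x y = d y x) ∧ ∀ x y z, d x z ≤ d x y + d y z

/-- The metric `d` induces the topology of `G`. -/
def IsCompatible (G : Type*) [TopologicalSpace G] (d : G → G → ℝ) : Prop :=
  ∀ (x : G) (s : Set G), s ∈ nhds x ↔ ∃ ε > (0 : ℝ), {y : G | d x y < ε} ⊆ s

/-- A compatible left-invariant metric on a topological group. -/
def IsCompatibleLeftInvariantMetric (G : Type*) [Group G] [TopologicalSpace G]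
    (d : G → G → ℝ) : Prop :=
  IsMetric d ∧ IsCompatible G d ∧ ∀ h g f : G, d (h * g) (h * f) = d g f

/-- A set has finite diameter with respect to `d`. -/
def FiniteDiam {G : Type*} (d : G → G → ℝ) (A : Set G) : Prop :=
  ∃ C : ℝ, ∀ x ∈ A, ∀ y ∈ A, d x y ≤ C

/-- `A` has property (OB) relative to `G`: finite diameter for every compatible
left-invariant metric. -/
def HasRelPropOB (G : Type*) [Group G] [TopologicalSpace G] (A : Set G) : Prop :=
  ∀ d : G → G → ℝ, IsCompatibleLeftInvariantMetric G d → FiniteDiam d A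

/-- A sequence tends to infinity in `G` if some compatible left-invariant metric
witnesses `d (g n) 1 → ∞`. -/
def TendsToInfinity (G : Type*) [Group G] [TopologicalSpace G] (g : ℕ → G) : Prop :=
  ∃ d : G → G → ℝ, IsCompatibleLeftInvariantMetric G d ∧
    Filter.Tendsto (fun n => d (g n) 1) Filter.atTop Filter.atTop

/-- A compatible left-invariant metric is metrically proper if `d (g n) 1 → ∞`
whenever `g n → ∞`. -/
def MetricallyProperMetric (G : Type*) [Group G] [TopologicalSpace G]
    (d : G → G → ℝ) : Prop :=
  ∀ g : ℕ → G, TendsToInfinity G g →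
    Filter.Tendsto (fun n => d (g n) 1) Filter.atTop Filter.atTop

/-- The word metric (with values in `ℝ`) associated to a symmetric generating set `S`. -/
noncomputable def wordMetric {G : Type*} [Group G] (S : Set G) (f h : G) : ℝ :=
  sInf {r : ℝ | ∃ l : List G, (∀ x ∈ l, x ∈ S) ∧ f = h * l.prod ∧ r = l.length}

/-- `∂(f,h) = inf { Σ d(gᵢ,1) : gᵢ ∈ B_ε, f = h g₁ ⋯ gₙ }`. -/
noncomputable def weightedWordMetric {G : Type*} [Group G] (d : G → G → ℝ) (ε : ℝ)
    (f h : G) : ℝ :=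
  sInf {r : ℝ | ∃ l : List G, (∀ x ∈ l, d x 1 ≤ ε) ∧ f = h * l.prod ∧
    r = (l.map fun g => d g 1).sum}

/-!
`∂` dominates `d` by the triangle inequality along a word and agrees with `d` on the `ε`-ball, so
it induces the same topology. A word in `B_ε` of cost `c` can be regrouped greedily, merging
neighbours whose lengths add up to at most `ε`, into a word in `B_ε` with at most `2c/ε + 1`
letters; this gives the lower bound, while the upper bound holds because every letter costs at
most `ε`.
-/

/-- The potential `ε · length + N head` grows by at most `2 N a` when `a` is prepended: merging `a`
into the head costs at most `N a`, while keeping it separate (because `ε < N a + N b`) costs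
`ε + N a - N b < 2 N a`. -/
theorem List.exists_prod_eq_mul_length_le {M : Type*} [Monoid M] {N : M → ℝ}
    (hN : ∀ a, 0 ≤ N a) (hN_mul : ∀ a b, N (a * b) ≤ N a + N b) {ε : ℝ} (hε : 0 ≤ ε)
    (l : List M) (hl : ∀ x ∈ l, N x ≤ ε) :
    ∃ l' : List M, (∀ x ∈ l', N x ≤ ε) ∧ l'.prod = l.prod ∧
      ε * l'.length ≤ 2 * (l.map N).sum + ε := by
  suffices ∃ l' : List M, (∀ x ∈ l', N x ≤ ε) ∧ l'.prod = l.prod ∧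
      ε * l'.length + (l'.map N).headD 0 ≤ 2 * (l.map N).sum + ε by
    obtain ⟨l', hl', hprod, hpot⟩ := this
    have hhead : 0 ≤ (l'.map N).headD 0 := by cases l' <;> simp [hN]
    exact ⟨l', hl', hprod, by linarith⟩
  induction l with
  | nil => exact ⟨[], by simp, rfl, by simpa using hε⟩
  | cons a t ih =>
    obtain ⟨t', ht', hprod, hpot⟩ := ih fun x hx => hl x (List.mem_cons_of_mem a hx)
    have ha : N a ≤ ε := hl a List.mem_cons_self
    cases t' with
    | nil =>
      have ht : 0 ≤ (t.map N).sum := List.sum_nonneg fun r hr => by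
        obtain ⟨g, -, rfl⟩ := List.mem_map.1 hr
        exact hN g
      refine ⟨[a], by simpa using ha, by simp [← hprod], ?_⟩
      simp only [List.map_cons, List.map_nil, List.headD_cons, List.length_singleton,
        List.sum_cons, Nat.cast_one]
      linarith [hN a]
    | cons b s =>
      simp only [List.map_cons, List.headD_cons, List.length_cons, Nat.cast_add,
        Nat.cast_one] at hpot
      simp only [List.mem_cons, forall_eq_or_imp] at ht'
      by_cases hab : N a + N b ≤ ε
      · refine ⟨a * b :: s, ?_, by simp [← hprod, mul_assoc], ?_⟩
        · simp only [List.mem_cons, forall_eq_or_imp]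
          exact ⟨(hN_mul a b).trans hab, ht'.2⟩
        · simp only [List.map_cons, List.headD_cons, List.length_cons, List.sum_cons,
            Nat.cast_add, Nat.cast_one]
          linarith [hN_mul a b, hN a]
      · refine ⟨a :: b :: s, ?_, by simp [← hprod], ?_⟩
        · simp only [List.mem_cons, forall_eq_or_imp]
          exact ⟨ha, ht'⟩
        · simp only [List.map_cons, List.headD_cons, List.length_cons, List.sum_cons,
            Nat.cast_add, Nat.cast_one]
          linarith

theorem Subgroup.exists_list_prod_eq_of_closure_eq_top {G : Type*} [Group G] {S : Set G}
    (hS : ∀ x ∈ S, x⁻¹ ∈ S) (hgen : Subgroup.closure S = ⊤) (g : G) :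
    ∃ l : List G, (∀ x ∈ l, x ∈ S) ∧ l.prod = g := by
  have hg : g ∈ Submonoid.closure (S ∪ S⁻¹) := by
    rw [← Subgroup.closure_toSubmonoid, hgen]
    trivial
  obtain ⟨l, hl, hprod⟩ := Submonoid.exists_list_of_mem_closure hg
  refine ⟨l, fun x hx => ?_, hprod⟩
  rcases hl x hx with hx | hx
  · exact hx
  · simpa using hS _ hx

theorem IsCompatible.of_le_of_le_of_dist_le {X : Type*} [TopologicalSpace X]
    {d d' : X → X → ℝ} (hd : IsCompatible X d) (hle : ∀ x y, d x y ≤ d' x y) {δ : ℝ}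
    (hδ : 0 < δ) (hle' : ∀ x y, d x y ≤ δ → d' x y ≤ d x y) : IsCompatible X d' := by
  intro x s
  rw [hd x s]
  constructor
  · rintro ⟨r, hr, hsub⟩
    exact ⟨r, hr, fun y hy => hsub ((hle x y).trans_lt hy)⟩
  · rintro ⟨r, hr, hsub⟩
    refine ⟨min r δ, lt_min hr hδ, fun y hy => hsub ?_⟩
    have hy : d x y < min r δ := hy
    exact (hle' x y (hy.le.trans (min_le_right r δ))).trans_lt (hy.trans_le (min_le_left r δ))

namespace IsMetric

variable {X : Type*} {d : X → X → ℝ}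

theorem dist_self (hd : IsMetric d) (x : X) : d x x = 0 := (hd.1 x x).2 rfl

theorem comm (hd : IsMetric d) (x y : X) : d x y = d y x := hd.2.1 x y

theorem triangle (hd : IsMetric d) (x y z : X) : d x z ≤ d x y + d y z := hd.2.2 x y z

theorem nonneg (hd : IsMetric d) (x y : X) : 0 ≤ d x y := by
  linarith [hd.triangle x y x, hd.comm x y, hd.dist_self x]

end IsMetric

def IsLeftInvariant {G : Type*} [Mul G] (d : G → G → ℝ) : Prop :=
  ∀ h g f : G, d (h * g) (h * f) = d g f

section LeftInvariant

variable {G : Type*} [Group G] {d : G → G → ℝ}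

theorem IsLeftInvariant.dist_eq_dist_inv_mul_one (hinv : IsLeftInvariant d) (f h : G) :
    d f h = d (h⁻¹ * f) 1 := by
  simpa using (hinv h⁻¹ f h).symm

theorem IsLeftInvariant.dist_inv_one (hd : IsMetric d) (hinv : IsLeftInvariant d) (x : G) :
    d x⁻¹ 1 = d x 1 := by
  simpa [hd.comm 1 x] using (hinv x x⁻¹ 1).symm

theorem IsLeftInvariant.dist_mul_one_le (hd : IsMetric d) (hinv : IsLeftInvariant d) (a b : G) :
    d (a * b) 1 ≤ d a 1 + d b 1 := by
  have hb : d (a * b) a = d b 1 := by simpa using hinv a b 1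
  linarith [hd.triangle (a * b) a 1]

theorem IsLeftInvariant.dist_prod_one_le (hd : IsMetric d) (hinv : IsLeftInvariant d)
    (l : List G) : d l.prod 1 ≤ (l.map fun g => d g 1).sum := by
  induction l with
  | nil => simp [hd.dist_self]
  | cons a t ih =>
    rw [List.prod_cons, List.map_cons, List.sum_cons]
    linarith [hinv.dist_mul_one_le hd a t.prod]

end LeftInvariant

section WeightedWordMetric

variable {G : Type*} [Group G] {d : G → G → ℝ} {ε : ℝ}

def weightedWordCosts (d : G → G → ℝ) (ε : ℝ) (f h : G) : Set ℝ :=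
  {r : ℝ | ∃ l : List G, (∀ x ∈ l, d x 1 ≤ ε) ∧ f = h * l.prod ∧
    r = (l.map fun g => d g 1).sum}

theorem exists_word_of_closure_eq_top (hd : IsMetric d) (hinv : IsLeftInvariant d)
    (hgen : Subgroup.closure {g : G | d g 1 ≤ ε} = ⊤) (f h : G) :
    ∃ l : List G, (∀ x ∈ l, d x 1 ≤ ε) ∧ f = h * l.prod := by
  obtain ⟨l, hl, hprod⟩ := Subgroup.exists_list_prod_eq_of_closure_eq_top
    (fun x (hx : d x 1 ≤ ε) => (hinv.dist_inv_one hd x).trans_le hx) hgen (h⁻¹ * f)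
  exact ⟨l, hl, by rw [hprod, mul_inv_cancel_left]⟩

theorem weightedWordCosts_nonempty (hd : IsMetric d) (hinv : IsLeftInvariant d)
    (hgen : Subgroup.closure {g : G | d g 1 ≤ ε} = ⊤) (f h : G) :
    (weightedWordCosts d ε f h).Nonempty := by
  obtain ⟨l, hl, hfh⟩ := exists_word_of_closure_eq_top hd hinv hgen f h
  exact ⟨_, l, hl, hfh, rfl⟩

theorem weightedWordCosts_bddBelow (hd : IsMetric d) (f h : G) :
    BddBelow (weightedWordCosts d ε f h) := by
  refine ⟨0, ?_⟩
  rintro _ ⟨l, -, -, rfl⟩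
  exact List.sum_nonneg fun r hr => by
    obtain ⟨g, -, rfl⟩ := List.mem_map.1 hr
    exact hd.nonneg g 1

theorem weightedWordCosts_subset_swap (hd : IsMetric d) (hinv : IsLeftInvariant d) (f h : G) :
    weightedWordCosts d ε f h ⊆ weightedWordCosts d ε h f := by
  rintro _ ⟨l, hl, hfh, rfl⟩
  refine ⟨(l.map fun x => x⁻¹).reverse, ?_, ?_, ?_⟩
  · simp only [List.mem_reverse, List.mem_map]
    rintro _ ⟨x, hx, rfl⟩
    rw [hinv.dist_inv_one hd]
    exact hl x hx
  · rw [hfh, ← List.prod_inv_reverse, mul_inv_cancel_right]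
  · simp only [List.map_reverse, List.sum_reverse, List.map_map, Function.comp_def,
      hinv.dist_inv_one hd]

theorem weightedWordCosts_add_subset (x y z : G) :
    weightedWordCosts d ε x y + weightedWordCosts d ε y z ⊆ weightedWordCosts d ε x z := by
  rintro _ ⟨_, ⟨l₁, hl₁, hxy, rfl⟩, _, ⟨l₂, hl₂, hyz, rfl⟩, rfl⟩
  refine ⟨l₂ ++ l₁, ?_, ?_, ?_⟩
  · simp only [List.mem_append]
    rintro g (hg | hg)
    exacts [hl₂ g hg, hl₁ g hg]
  · rw [List.prod_append, hxy, hyz, mul_assoc]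
  · rw [List.map_append, List.sum_append, add_comm]

theorem weightedWordMetric_le_sum (hd : IsMetric d) {f h : G} {l : List G}
    (hl : ∀ x ∈ l, d x 1 ≤ ε) (hfh : f = h * l.prod) :
    weightedWordMetric d ε f h ≤ (l.map fun g => d g 1).sum :=
  csInf_le (weightedWordCosts_bddBelow hd f h) ⟨l, hl, hfh, rfl⟩

theorem le_weightedWordMetric (hd : IsMetric d) (hinv : IsLeftInvariant d)
    (hgen : Subgroup.closure {g : G | d g 1 ≤ ε} = ⊤) {f h : G} {c : ℝ}
    (hc : ∀ l : List G, (∀ x ∈ l, d x 1 ≤ ε) → f = h * l.prod →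
      c ≤ (l.map fun g => d g 1).sum) :
    c ≤ weightedWordMetric d ε f h :=
  le_csInf (weightedWordCosts_nonempty hd hinv hgen f h) fun _ ⟨l, hl, hfh, hr⟩ =>
    hr ▸ hc l hl hfh

theorem dist_le_weightedWordMetric (hd : IsMetric d) (hinv : IsLeftInvariant d)
    (hgen : Subgroup.closure {g : G | d g 1 ≤ ε} = ⊤) (f h : G) :
    d f h ≤ weightedWordMetric d ε f h :=
  le_weightedWordMetric hd hinv hgen fun l _ hfh => by
    rw [hinv.dist_eq_dist_inv_mul_one, hfh, inv_mul_cancel_left]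
    exact hinv.dist_prod_one_le hd l

theorem weightedWordMetric_nonneg (hd : IsMetric d) (hinv : IsLeftInvariant d)
    (hgen : Subgroup.closure {g : G | d g 1 ≤ ε} = ⊤) (f h : G) :
    0 ≤ weightedWordMetric d ε f h :=
  (hd.nonneg f h).trans (dist_le_weightedWordMetric hd hinv hgen f h)

theorem weightedWordMetric_le_dist (hd : IsMetric d) (hinv : IsLeftInvariant d) {f h : G}
    (hfh : d f h ≤ ε) : weightedWordMetric d ε f h ≤ d f h := by
  rw [hinv.dist_eq_dist_inv_mul_one] at hfh ⊢
  simpa using weightedWordMetric_le_sum hd (l := [h⁻¹ * f]) (by simpa using hfh) (by simp)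

theorem weightedWordMetric_comm (hd : IsMetric d) (hinv : IsLeftInvariant d) (f h : G) :
    weightedWordMetric d ε f h = weightedWordMetric d ε h f :=
  congrArg sInf ((weightedWordCosts_subset_swap hd hinv f h).antisymm
    (weightedWordCosts_subset_swap hd hinv h f))

theorem weightedWordMetric_triangle (hd : IsMetric d) (hinv : IsLeftInvariant d)
    (hgen : Subgroup.closure {g : G | d g 1 ≤ ε} = ⊤) (x y z : G) :
    weightedWordMetric d ε x z ≤ weightedWordMetric d ε x y + weightedWordMetric d ε y z := by
  have hne := weightedWordCosts_nonempty hd hinv hgen (ε := ε)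
  have hbdd := weightedWordCosts_bddBelow hd (ε := ε)
  calc weightedWordMetric d ε x z
      ≤ sInf (weightedWordCosts d ε x y + weightedWordCosts d ε y z) :=
        csInf_le_csInf (hbdd x z) ((hne x y).add (hne y z)) (weightedWordCosts_add_subset x y z)
    _ = weightedWordMetric d ε x y + weightedWordMetric d ε y z :=
        csInf_add (hne x y) (hbdd x y) (hne y z) (hbdd y z)

theorem weightedWordMetric_mul_left (k g f : G) :
    weightedWordMetric d ε (k * g) (k * f) = weightedWordMetric d ε g f := by
  simp only [weightedWordMetric, mul_assoc, mul_right_inj]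

theorem isMetric_weightedWordMetric (hd : IsMetric d) (hinv : IsLeftInvariant d)
    (hgen : Subgroup.closure {g : G | d g 1 ≤ ε} = ⊤) : IsMetric (weightedWordMetric d ε) := by
  refine ⟨fun x y => ⟨fun h0 => ?_, ?_⟩, weightedWordMetric_comm hd hinv,
    weightedWordMetric_triangle hd hinv hgen⟩
  · refine (hd.1 x y).1 (le_antisymm ?_ (hd.nonneg x y))
    exact h0 ▸ dist_le_weightedWordMetric hd hinv hgen x y
  · rintro rfl
    exact le_antisymm (weightedWordMetric_le_sum hd (l := []) (by simp) (by simp))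
      (weightedWordMetric_nonneg hd hinv hgen x x)

theorem isCompatible_weightedWordMetric [TopologicalSpace G] (hd : IsMetric d)
    (hinv : IsLeftInvariant d) (hε : 0 < ε) (hgen : Subgroup.closure {g : G | d g 1 ≤ ε} = ⊤)
    (hcomp : IsCompatible G d) : IsCompatible G (weightedWordMetric d ε) :=
  hcomp.of_le_of_le_of_dist_le (dist_le_weightedWordMetric hd hinv hgen) hε
    fun _ _ => weightedWordMetric_le_dist hd hinv

theorem wordMetric_le_length {S : Set G} {f h : G} {l : List G} (hl : ∀ x ∈ l, x ∈ S)
    (hfh : f = h * l.prod) : wordMetric S f h ≤ l.length :=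
  csInf_le ⟨0, by rintro _ ⟨l, -, -, rfl⟩; positivity⟩ ⟨l, hl, hfh, rfl⟩

theorem weightedWordMetric_le_mul_wordMetric (hd : IsMetric d) (hinv : IsLeftInvariant d)
    (hε : 0 < ε) (hgen : Subgroup.closure {g : G | d g 1 ≤ ε} = ⊤) (f h : G) :
    weightedWordMetric d ε f h ≤ ε * wordMetric {g : G | d g 1 ≤ ε} f h := by
  obtain ⟨l₀, hl₀, hfh₀⟩ := exists_word_of_closure_eq_top hd hinv hgen f h
  rw [← div_le_iff₀' hε]
  refine le_csInf ⟨_, l₀, hl₀, hfh₀, rfl⟩ ?_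
  rintro _ ⟨l, hl, hfh, rfl⟩
  rw [div_le_iff₀' hε]
  calc weightedWordMetric d ε f h ≤ (l.map fun g => d g 1).sum := weightedWordMetric_le_sum hd hl hfh
    _ ≤ (l.map fun g => d g 1).length • ε := List.sum_le_card_nsmul _ _ fun r hr => by
        obtain ⟨g, hg, rfl⟩ := List.mem_map.1 hr
        exact hl g hg
    _ = ε * l.length := by rw [List.length_map, nsmul_eq_mul, mul_comm]

theorem mul_wordMetric_le_weightedWordMetric (hd : IsMetric d) (hinv : IsLeftInvariant d)
    (hε : 0 ≤ ε) (hgen : Subgroup.closure {g : G | d g 1 ≤ ε} = ⊤) (f h : G) :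
    ε * wordMetric {g : G | d g 1 ≤ ε} f h ≤ 2 * weightedWordMetric d ε f h + ε := by
  suffices (ε * wordMetric {g : G | d g 1 ≤ ε} f h - ε) / 2 ≤ weightedWordMetric d ε f h by
    linarith
  refine le_weightedWordMetric hd hinv hgen fun l hl hfh => ?_
  obtain ⟨l', hl', hprod, hlen⟩ := List.exists_prod_eq_mul_length_le (fun g => hd.nonneg g 1)
    (hinv.dist_mul_one_le hd) hε l hl
  have hρ : wordMetric {g : G | d g 1 ≤ ε} f h ≤ l'.length :=
    wordMetric_le_length hl' (by rw [hprod, hfh])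
  have := mul_le_mul_of_nonneg_left hρ hε
  linarith

end WeightedWordMetric

theorem weighted_word_metric_compatible_and_QI_to_word_metric {G : Type*} [Group G]
    [TopologicalSpace G] (d : G → G → ℝ) (hd : IsCompatibleLeftInvariantMetric G d)
    (ε : ℝ) (hε : 0 < ε) (hgen : Subgroup.closure {g : G | d g 1 ≤ ε} = ⊤) :
    IsCompatibleLeftInvariantMetric G (weightedWordMetric d ε) ∧
      ∀ f h : G,
        ε / 4 * wordMetric {g : G | d g 1 ≤ ε} f h - (1 + ε / 4) ≤
            weightedWordMetric d ε f h ∧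
          weightedWordMetric d ε f h ≤ ε * wordMetric {g : G | d g 1 ≤ ε} f h := by
  obtain ⟨hm, hcomp, hinv⟩ := hd
  refine ⟨⟨isMetric_weightedWordMetric hm hinv hgen,
    isCompatible_weightedWordMetric hm hinv hε hgen hcomp, weightedWordMetric_mul_left⟩,
    fun f h => ⟨?_, weightedWordMetric_le_mul_wordMetric hm hinv hε hgen f h⟩⟩
  have hlower := mul_wordMetric_le_weightedWordMetric hm hinv hε.le hgen f h
  have hnonneg := weightedWordMetric_nonneg hm hinv hgen f h
  linarith
end

section
/- If F: (X,d_X) → (Y,d_Y) is a bornologous map from a large scale geodesic metric space (X,d_X) to a metric space (Y,d_Y), then F is Lipschitz for large distances, i.e., there is a constant K ≥ 1 so that d_Y(Fx,Fx') ≤ K·d_X(x,x') whenever d_X(x,x') ≥ K. -/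
/-! Cut a `K`-chain from `x` to `x'` greedily into consecutive blocks, closing a block as soon as its
length exceeds `K`. Every block has length in `(K, 2K]`, so `F` moves its endpoints by at most the
bound `S` for `2K`-close points, and there are at most `(chain length) / K ≤ d(x, x')` blocks, plus a
tail of length `≤ K`. Hence `d(F x, F x') ≤ S (d(x, x') + 1) ≤ 2S d(x, x')` once `d(x, x') ≥ 1`. -/

open Finset

section Chains

variable {X Y : Type*} [PseudoMetricSpace X] [PseudoMetricSpace Y] {F : X → Y} {R S : ℝ}

theorem exists_cut_mul_dist_comp_le_sum_of_step_le (hR : 0 ≤ R)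
    (hF : ∀ a b, dist a b ≤ 2 * R → dist (F a) (F b) ≤ S) (z : ℕ → X) :
    ∀ n, (∀ i < n, dist (z i) (z (i + 1)) ≤ R) →
      ∃ j ≤ n, R * dist (F (z 0)) (F (z j)) ≤ S * ∑ i ∈ range j, dist (z i) (z (i + 1)) ∧
        ∑ i ∈ Ico j n, dist (z i) (z (i + 1)) ≤ R := by
  intro n
  induction n with
  | zero => exact fun _ => ⟨0, le_rfl, by simp, by simpa using hR⟩
  | succ n ih =>
    intro hz
    obtain ⟨j, hjn, hjF, hjtail⟩ := ih fun i hi => hz i (by omega)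
    have htail : ∑ i ∈ Ico j (n + 1), dist (z i) (z (i + 1)) =
        ∑ i ∈ Ico j n, dist (z i) (z (i + 1)) + dist (z n) (z (n + 1)) :=
      sum_Ico_succ_top hjn _
    by_cases hshort : ∑ i ∈ Ico j (n + 1), dist (z i) (z (i + 1)) ≤ R
    · exact ⟨j, by omega, hjF, hshort⟩
    have hlong := (not_le.mp hshort).le
    have hblock : dist (F (z j)) (F (z (n + 1))) ≤ S :=
      hF _ _ <| (dist_le_Ico_sum_dist z (by omega)).trans <| by linarith [hz n (by omega)]
    have hsplit := sum_range_add_sum_Ico (fun i => dist (z i) (z (i + 1))) (by omega : j ≤ n + 1)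
    refine ⟨n + 1, le_rfl, ?_, by simpa using hR⟩
    calc R * dist (F (z 0)) (F (z (n + 1)))
        ≤ R * dist (F (z 0)) (F (z j)) + R * dist (F (z j)) (F (z (n + 1))) := by
          rw [← mul_add]; exact mul_le_mul_of_nonneg_left (dist_triangle _ _ _) hR
      _ ≤ S * ∑ i ∈ range j, dist (z i) (z (i + 1)) +
            S * ∑ i ∈ Ico j (n + 1), dist (z i) (z (i + 1)) := by
          refine add_le_add hjF ?_
          have hS : 0 ≤ S := dist_nonneg.trans hblock
          nlinarith [dist_nonneg (x := F (z j)) (y := F (z (n + 1)))]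
      _ = S * ∑ i ∈ range (n + 1), dist (z i) (z (i + 1)) := by rw [← mul_add, hsplit]

theorem mul_dist_comp_le_of_step_le (hR : 0 ≤ R)
    (hF : ∀ a b, dist a b ≤ 2 * R → dist (F a) (F b) ≤ S) (z : ℕ → X) (n : ℕ)
    (hz : ∀ i < n, dist (z i) (z (i + 1)) ≤ R) :
    R * dist (F (z 0)) (F (z n)) ≤ S * (∑ i ∈ range n, dist (z i) (z (i + 1)) + R) := by
  obtain ⟨j, hjn, hjF, hjtail⟩ := exists_cut_mul_dist_comp_le_sum_of_step_le hR hF z n hz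
  have hlast : dist (F (z j)) (F (z n)) ≤ S :=
    hF _ _ <| (dist_le_Ico_sum_dist z hjn).trans <| by linarith
  have hsplit := sum_range_add_sum_Ico (fun i => dist (z i) (z (i + 1))) hjn
  have hS : 0 ≤ S := dist_nonneg.trans hlast
  have htail_nonneg : 0 ≤ ∑ i ∈ Ico j n, dist (z i) (z (i + 1)) := sum_nonneg fun _ _ => dist_nonneg
  calc R * dist (F (z 0)) (F (z n))
      ≤ R * dist (F (z 0)) (F (z j)) + R * dist (F (z j)) (F (z n)) := by
        rw [← mul_add]; exact mul_le_mul_of_nonneg_left (dist_triangle _ _ _) hR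
    _ ≤ S * ∑ i ∈ range j, dist (z i) (z (i + 1)) + S * R := by
        refine add_le_add hjF ?_
        rw [mul_comm S R]; exact mul_le_mul_of_nonneg_left hlast hR
    _ ≤ S * (∑ i ∈ range n, dist (z i) (z (i + 1)) + R) := by
        rw [← hsplit]; nlinarith

end Chains

theorem bornologous_on_large_scale_geodesic_is_lipschitz_for_large_distances
    {X Y : Type*} [MetricSpace X] [MetricSpace Y] (F : X → Y)
    (hborn : ∀ R > (0 : ℝ), ∃ S > (0 : ℝ), ∀ x x' : X, dist x x' ≤ R → dist (F x) (F x') ≤ S)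
    (hgeo : ∃ K : ℝ, 1 ≤ K ∧ ∀ x y : X, ∃ (n : ℕ) (z : ℕ → X), z 0 = x ∧ z n = y ∧
      (∀ i < n, dist (z i) (z (i + 1)) ≤ K) ∧
      (∑ i ∈ Finset.range n, dist (z i) (z (i + 1))) ≤ K * dist x y) :
    ∃ K : ℝ, 1 ≤ K ∧ ∀ x x' : X, K ≤ dist x x' → dist (F x) (F x') ≤ K * dist x x' := by
  obtain ⟨K, hK, hchain⟩ := hgeo
  obtain ⟨S, hS, hF⟩ := hborn (2 * K) (by linarith)
  refine ⟨max 1 (2 * S), le_max_left _ _, fun x x' hxx' => ?_⟩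
  have hd : 1 ≤ dist x x' := (le_max_left _ _).trans hxx'
  obtain ⟨n, z, rfl, rfl, hsteps, hlength⟩ := hchain x x'
  have hKF := mul_dist_comp_le_of_step_le (by linarith) hF z n hsteps
  have hFS : dist (F (z 0)) (F (z n)) ≤ S * (dist (z 0) (z n) + 1) := by
    refine le_of_mul_le_mul_left ?_ (by linarith : 0 < K)
    nlinarith
  calc dist (F (z 0)) (F (z n)) ≤ 2 * S * dist (z 0) (z n) := by nlinarith
    _ ≤ max 1 (2 * S) * dist (z 0) (z n) := by gcongr; exact le_max_right _ _
end

section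
/- The following are equivalent for a separable metrisable topological group G: (1) G admits a maximal compatible left-invariant metric; (2) G is generated by an open set having property (OB) relative to G; (3) G has the local property (OB) and G is not the union of a countable chain of proper open subgroups. -/
open Filter Topology
open scoped Pointwise

/-!
(1 ⇒ 3) If `d` is maximal, every `d`-bounded set has property (OB), in particular every ball.
If `G` were the union of a chain of proper open subgroups `Vₙ`, pick `gₙ ∉ Vₙ`; adding to `d`
a seminorm that is at least `Fₙ` off `Vₙ` and vanishes on `V₀` gives a compatible metric, and
`Fₙ` can be chosen to outgrow every `K d(1, gₙ) + K`.

(3 ⇒ 2) The open subgroups generated by an (OB) neighbourhood `B` of `1` and the first `n` terms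
of a dense sequence `xᵢ` form a chain covering `G`, so one of them, say the `N`-th, is `G`; it is
generated by the (OB) open set `{1, x₀, …, x_{N-1}} * B`.

(2 ⇒ 1) Let `d` be a Birkhoff–Kakutani metric and `U ∋ 1` an open generating (OB) set. The
word metric over `U ∪ U⁻¹` with letters weighted by `d(1, ·)` agrees with `d` near `1`, hence is
compatible. It is maximal: a word of weight `s` regroups into `O(s / α + 1)` letters, where the
`d`-ball of radius `α` lies in `U`, and letters have bounded length for every other metric.
-/

open scoped NNReal

section LeftInvariantMetric

theorem IsMetric.nonneg_s14 {X : Type*} {d : X → X → ℝ} (hd : IsMetric d) (x y : X) :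
    0 ≤ d x y := by
  have := hd.2.2 x y x
  rw [(hd.1 x x).2 rfl, hd.2.1 y x] at this
  linarith

variable {G : Type*} [Group G] {d : G → G → ℝ}

theorem GroupSeminorm.apply_list_prod_le (N : GroupSeminorm G) (L : List G) :
    N L.prod ≤ (L.map N).sum := by
  induction L with
  | nil => simp
  | cons a L ih => simpa using (map_mul_le_add N a L.prod).trans (by linarith)

variable [TopologicalSpace G]

namespace IsCompatibleLeftInvariantMetric

def toGroupSeminorm (hd : IsCompatibleLeftInvariantMetric G d) : GroupSeminorm G where
  toFun := d 1
  map_one' := (hd.1.1 1 1).2 rfl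
  mul_le' x y := by
    have h := hd.2.2 x 1 y
    rw [mul_one] at h
    linarith [hd.1.2.2 1 x (x * y)]
  inv' x := by
    have h := hd.2.2 x 1 x⁻¹
    rw [mul_one, mul_inv_cancel] at h
    rw [← h, hd.1.2.1]

theorem toGroupSeminorm_apply (hd : IsCompatibleLeftInvariantMetric G d) (g : G) :
    hd.toGroupSeminorm g = d 1 g := rfl

theorem eq_toGroupSeminorm (hd : IsCompatibleLeftInvariantMetric G d) (x y : G) :
    d x y = hd.toGroupSeminorm (x⁻¹ * y) := by
  rw [toGroupSeminorm_apply, ← hd.2.2 x⁻¹, inv_mul_cancel]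

theorem hasBasis_nhds_one (hd : IsCompatibleLeftInvariantMetric G d) :
    (𝓝 (1 : G)).HasBasis (0 < ·) fun ε => {g | d 1 g < ε} :=
  ⟨hd.2.1 1⟩

theorem of_hasBasis [IsTopologicalGroup G] (hd : IsMetric d)
    (hinv : ∀ h x y : G, d (h * x) (h * y) = d x y)
    (hbasis : (𝓝 (1 : G)).HasBasis (0 < ·) fun ε => {g | d 1 g < ε}) :
    IsCompatibleLeftInvariantMetric G d := by
  refine ⟨hd, fun x s => ?_, hinv⟩
  have hball : ∀ ε, (x * ·) '' {g | d 1 g < ε} = {y | d x y < ε} := fun ε => by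
    rw [Set.image_mul_left]
    ext y
    show d 1 (x⁻¹ * y) < ε ↔ d x y < ε
    rw [← hinv x, mul_one, mul_inv_cancel_left]
  rw [← map_mul_left_nhds_one x, (hbasis.map _).mem_iff]
  simp only [hball]

theorem of_groupSeminorm [IsTopologicalGroup G] (hd : IsCompatibleLeftInvariantMetric G d)
    (N : GroupSeminorm G) (hle : ∀ g, d 1 g ≤ N g) (hge : ∀ᶠ g in 𝓝 1, N g ≤ d 1 g) :
    IsCompatibleLeftInvariantMetric G fun x y => N (x⁻¹ * y) := by
  refine of_hasBasis ⟨fun x y => ⟨fun h => ?_, fun h => by simp [h]⟩, fun x y => ?_,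
    fun x y z => ?_⟩ (fun h x y => by simp [mul_assoc]) ?_
  · refine (hd.1.1 x y).1 (le_antisymm ?_ (hd.1.nonneg_s14 x y))
    rw [hd.eq_toGroupSeminorm]
    exact h ▸ hle _
  · show N (x⁻¹ * y) = N (y⁻¹ * x)
    rw [← map_inv_eq_map N]
    simp
  · simpa [mul_assoc] using map_mul_le_add N (x⁻¹ * y) (y⁻¹ * z)
  · obtain ⟨δ, hδ, hsub⟩ := hd.hasBasis_nhds_one.mem_iff.1 hge
    refine hd.hasBasis_nhds_one.to_hasBasis (fun ε hε => ⟨ε, hε, fun g hg => ?_⟩)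
      fun ε hε => ⟨min δ ε, lt_min hδ hε, fun g (hg : d 1 g < min δ ε) => ?_⟩
    · exact (hle g).trans_lt (by simpa using hg)
    · simpa using
        (hsub (hg.trans_le (min_le_left _ _))).trans_lt (hg.trans_le (min_le_right _ _))

end IsCompatibleLeftInvariantMetric

end LeftInvariantMetric

section PropertyOB

variable {G : Type*} [Group G] [TopologicalSpace G]

theorem hasRelPropOB_iff_bddAbove {A : Set G} :
    HasRelPropOB G A ↔
      ∀ d, IsCompatibleLeftInvariantMetric G d → BddAbove (d 1 '' A) := by
  refine ⟨fun h d hd => ?_, fun h d hd => ?_⟩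
  · obtain ⟨C, hC⟩ := h d hd
    rcases A.eq_empty_or_nonempty with rfl | ⟨a₀, ha₀⟩
    · simp
    refine ⟨d 1 a₀ + C, Set.forall_mem_image.2 fun a ha => ?_⟩
    linarith [hd.1.2.2 1 a₀ a, hC a₀ ha₀ a ha]
  · obtain ⟨C, hC⟩ := h d hd
    refine ⟨C + C, fun x hx y hy => ?_⟩
    have := hd.1.2.2 x 1 y
    rw [hd.1.2.1 x 1] at this
    linarith [hC (Set.mem_image_of_mem _ hx), hC (Set.mem_image_of_mem _ hy)]

theorem HasRelPropOB.mono {A B : Set G} (hB : HasRelPropOB G B) (hAB : A ⊆ B) :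
    HasRelPropOB G A :=
  fun d hd => let ⟨C, hC⟩ := hB d hd; ⟨C, fun x hx y hy => hC x (hAB hx) y (hAB hy)⟩

theorem HasRelPropOB.union {A B : Set G} (hA : HasRelPropOB G A) (hB : HasRelPropOB G B) :
    HasRelPropOB G (A ∪ B) :=
  hasRelPropOB_iff_bddAbove.2 fun d hd => by
    rw [Set.image_union]
    exact (hasRelPropOB_iff_bddAbove.1 hA d hd).union (hasRelPropOB_iff_bddAbove.1 hB d hd)

theorem HasRelPropOB.inv {A : Set G} (hA : HasRelPropOB G A) : HasRelPropOB G A⁻¹ :=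
  hasRelPropOB_iff_bddAbove.2 fun d hd => by
    obtain ⟨C, hC⟩ := hasRelPropOB_iff_bddAbove.1 hA d hd
    refine ⟨C, Set.forall_mem_image.2 fun a ha => ?_⟩
    rw [← hd.toGroupSeminorm_apply, ← map_inv_eq_map]
    exact hC (Set.mem_image_of_mem _ ha)

theorem HasRelPropOB.mul {A B : Set G} (hA : HasRelPropOB G A) (hB : HasRelPropOB G B) :
    HasRelPropOB G (A * B) :=
  hasRelPropOB_iff_bddAbove.2 fun d hd => by
    obtain ⟨CA, hCA⟩ := hasRelPropOB_iff_bddAbove.1 hA d hd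
    obtain ⟨CB, hCB⟩ := hasRelPropOB_iff_bddAbove.1 hB d hd
    refine ⟨CA + CB, Set.forall_mem_image.2 ?_⟩
    rintro _ ⟨a, ha, b, hb, rfl⟩
    exact (map_mul_le_add hd.toGroupSeminorm a b).trans
      (add_le_add (hCA (Set.mem_image_of_mem _ ha)) (hCB (Set.mem_image_of_mem _ hb)))

theorem Set.Finite.hasRelPropOB {A : Set G} (hA : A.Finite) : HasRelPropOB G A :=
  hasRelPropOB_iff_bddAbove.2 fun _ _ => (hA.image _).bddAbove

end PropertyOB

section ChainSeminorm

variable {G : Type*} [Group G]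

noncomputable def chainSeminorm (V : ℕ → Subgroup G) (hV : Monotone V)
    (hcover : ∀ g, ∃ n, g ∈ V n) (F : ℕ → ℝ) : GroupSeminorm G where
  toFun g := ∑ k ∈ Finset.range (sInf {n | g ∈ V n}), |F k|
  map_one' := by simp
  mul_le' g h := by
    have hsum : Monotone fun n => ∑ k ∈ Finset.range n, |F k| := fun m n hmn =>
      Finset.sum_le_sum_of_subset_of_nonneg (Finset.range_mono hmn) fun _ _ _ => abs_nonneg _
    have hidx : sInf {n | g * h ∈ V n} ≤ max (sInf {n | g ∈ V n}) (sInf {n | h ∈ V n}) :=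
      Nat.sInf_le (mul_mem (hV (le_max_left _ _) (Nat.sInf_mem (hcover g)))
        (hV (le_max_right _ _) (Nat.sInf_mem (hcover h))))
    exact (hsum hidx).trans <| hsum.map_max.trans_le <| max_le_add_of_nonneg
      (Finset.sum_nonneg fun _ _ => abs_nonneg _) (Finset.sum_nonneg fun _ _ => abs_nonneg _)
  inv' g := by simp only [inv_mem_iff]

variable {V : ℕ → Subgroup G} {hV : Monotone V} {hcover : ∀ g, ∃ n, g ∈ V n}
  {F : ℕ → ℝ}

theorem chainSeminorm_apply (g : G) :
    chainSeminorm V hV hcover F g = ∑ k ∈ Finset.range (sInf {n | g ∈ V n}), |F k| := rfl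

theorem chainSeminorm_eq_zero {g : G} (hg : g ∈ V 0) : chainSeminorm V hV hcover F g = 0 := by
  simp [chainSeminorm_apply, Nat.eq_zero_of_le_zero (Nat.sInf_le (s := {n | g ∈ V n}) hg)]

theorem le_chainSeminorm {g : G} {n : ℕ} (hg : g ∉ V n) :
    F n ≤ chainSeminorm V hV hcover F g := by
  have hn : n < sInf {n | g ∈ V n} :=
    lt_of_not_ge fun h => hg (hV h (Nat.sInf_mem (hcover g)))
  exact (le_abs_self _).trans
    (Finset.single_le_sum (f := fun k => |F k|) (fun _ _ => abs_nonneg _) (Finset.mem_range.2 hn))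

end ChainSeminorm

section MaximalMetric

variable {G : Type*} [Group G] [TopologicalSpace G] {d : G → G → ℝ}

def IsMaximalMetric (G : Type*) [Group G] [TopologicalSpace G] (d : G → G → ℝ) : Prop :=
  ∀ e : G → G → ℝ, IsCompatibleLeftInvariantMetric G e →
    ∃ K : ℝ, 1 ≤ K ∧ ∀ g f : G, e g f ≤ K * d g f + K

theorem IsMaximalMetric.hasRelPropOB (hmax : IsMaximalMetric G d) {A : Set G}
    (hA : BddAbove (d 1 '' A)) : HasRelPropOB G A :=
  hasRelPropOB_iff_bddAbove.2 fun e he => by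
    obtain ⟨C, hC⟩ := hA
    obtain ⟨K, hK, hKe⟩ := hmax e he
    refine ⟨K * C + K, Set.forall_mem_image.2 fun a ha => (hKe 1 a).trans ?_⟩
    gcongr
    exact hC (Set.mem_image_of_mem _ ha)

variable [IsTopologicalGroup G]

theorem IsCompatibleLeftInvariantMetric.exists_forall_notMem_le
    (hd : IsCompatibleLeftInvariantMetric G d) {V : ℕ → Subgroup G}
    (hVo : ∀ n, IsOpen (V n : Set G)) (hV : Monotone V)
    (hcover : ⋃ n, (V n : Set G) = Set.univ) (F : ℕ → ℝ) :
    ∃ e, IsCompatibleLeftInvariantMetric G e ∧ ∀ n, ∀ g ∉ V n, F n ≤ e 1 g := by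
  set ℓ := chainSeminorm V hV (Set.iUnion_eq_univ_iff.1 hcover) F
  refine ⟨_, hd.of_groupSeminorm (hd.toGroupSeminorm + ℓ) (fun g => ?_) ?_, fun n g hg => ?_⟩
  · exact le_add_of_nonneg_right (apply_nonneg ℓ g)
  · filter_upwards [(hVo 0).mem_nhds (one_mem _)] with g hg
    simp [ℓ, chainSeminorm_eq_zero hg, hd.toGroupSeminorm_apply]
  · show F n ≤ (hd.toGroupSeminorm + ℓ) (1⁻¹ * g)
    rw [inv_one, one_mul, add_apply]
    exact le_add_of_nonneg_of_le (hd.1.nonneg_s14 1 g) (le_chainSeminorm hg)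

theorem IsMaximalMetric.exists_eq_top (hmax : IsMaximalMetric G d)
    (hd : IsCompatibleLeftInvariantMetric G d) {V : ℕ → Subgroup G}
    (hVo : ∀ n, IsOpen (V n : Set G)) (hV : Monotone V)
    (hcover : ⋃ n, (V n : Set G) = Set.univ) : ∃ n, V n = ⊤ := by
  by_contra! hne
  choose g hg using fun n => SetLike.exists_not_mem_of_ne_top (V n) (hne n)
  obtain ⟨e, he, hge⟩ :=
    hd.exists_forall_notMem_le hVo hV hcover fun n => (n + 1) * (d 1 (g n) + 1)
  obtain ⟨K, -, hKe⟩ := hmax e he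
  have hK : K ≤ ⌈K⌉₊ := Nat.le_ceil K
  have := (hge _ _ (hg ⌈K⌉₊)).trans (hKe 1 (g ⌈K⌉₊))
  nlinarith [hd.1.nonneg_s14 1 (g ⌈K⌉₊)]

end MaximalMetric

section DyadicWeight

variable {X : Type*}

open Classical in
noncomputable def dyadicWeight (W : ℕ → Set X) (g : X) : ℝ≥0 :=
  if h : ∃ n, g ∉ W n then (1 / 2) ^ Nat.find h else 0

variable {W : ℕ → Set X}

theorem dyadicWeight_eq_zero {g : X} (hg : ∀ n, g ∈ W n) : dyadicWeight W g = 0 := by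
  simp [dyadicWeight, hg]

theorem half_pow_le_dyadicWeight_iff (hW : Antitone W) {g : X} {n : ℕ} :
    (1 / 2) ^ n ≤ dyadicWeight W g ↔ g ∉ W n := by
  classical
  unfold dyadicWeight
  split_ifs with h
  · rw [(pow_right_strictAnti₀ (by norm_num) (by norm_num)).le_iff_ge, Nat.find_le_iff]
    exact ⟨fun ⟨m, hmn, hm⟩ hn => hm (hW hmn hn), fun h => ⟨n, le_rfl, h⟩⟩
  · push Not at h
    simp [h n]

theorem dyadicWeight_lt_half_pow_iff (hW : Antitone W) {g : X} {n : ℕ} :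
    dyadicWeight W g < (1 / 2) ^ n ↔ g ∈ W n := by
  rw [← not_le, half_pow_le_dyadicWeight_iff hW, not_not]

end DyadicWeight

section BirkhoffKakutani

variable {G : Type*} [Group G] {W : ℕ → Set G}

theorem dyadicWeight_mul_mul_le (hW : Antitone W)
    (hW3 : ∀ n, W (n + 1) * W (n + 1) * W (n + 1) ⊆ W n) (a b c : G) :
    dyadicWeight W (a * b * c) ≤
      2 * max (dyadicWeight W a) (max (dyadicWeight W b) (dyadicWeight W c)) := by
  by_cases H : ∃ n, a * b * c ∉ W n
  · classical
    refine (dif_pos H).trans_le ?_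
    rw [← div_le_iff₀' zero_lt_two, ← mul_one_div (_ ^ _), ← pow_succ]
    simp only [le_max_iff, half_pow_le_dyadicWeight_iff hW, ← not_and_or]
    rintro ⟨ha, hb, hc⟩
    exact Nat.find_spec H (hW3 _ (Set.mul_mem_mul (Set.mul_mem_mul ha hb) hc))
  · simp [dyadicWeight, H]

noncomputable def dyadicPreDist (W : ℕ → Set G) (x y : G) : ℝ≥0 :=
  max (dyadicWeight W (x⁻¹ * y)) (dyadicWeight W (y⁻¹ * x))

theorem dyadicPreDist_comm (x y : G) : dyadicPreDist W x y = dyadicPreDist W y x :=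
  max_comm _ _

theorem dyadicPreDist_mul_left (h x y : G) :
    dyadicPreDist W (h * x) (h * y) = dyadicPreDist W x y := by
  simp [dyadicPreDist, mul_assoc]

theorem dyadicPreDist_one_lt_iff (hW : Antitone W) {g : G} {n : ℕ} :
    dyadicPreDist W 1 g < (1 / 2) ^ n ↔ g ∈ W n ∧ g⁻¹ ∈ W n := by
  rw [dyadicPreDist, max_lt_iff, inv_one, one_mul, mul_one, dyadicWeight_lt_half_pow_iff hW,
    dyadicWeight_lt_half_pow_iff hW]

theorem dyadicPreDist_le (hW : Antitone W)
    (hW3 : ∀ n, W (n + 1) * W (n + 1) * W (n + 1) ⊆ W n) (x₁ x₂ x₃ x₄ : G) :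
    dyadicPreDist W x₁ x₄ ≤ 2 * max (dyadicPreDist W x₁ x₂)
      (max (dyadicPreDist W x₂ x₃) (dyadicPreDist W x₃ x₄)) := by
  have key : ∀ y₁ y₂ y₃ y₄ : G, dyadicWeight W (y₁⁻¹ * y₄) ≤ 2 * max (dyadicPreDist W y₁ y₂)
      (max (dyadicPreDist W y₂ y₃) (dyadicPreDist W y₃ y₄)) := by
    intro y₁ y₂ y₃ y₄
    have := dyadicWeight_mul_mul_le hW hW3 (y₁⁻¹ * y₂) (y₂⁻¹ * y₃) (y₃⁻¹ * y₄)
    simp only [mul_assoc, mul_inv_cancel_left] at this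
    refine this.trans ?_
    gcongr <;> exact le_max_left _ _
  refine max_le (key x₁ x₂ x₃ x₄) ((key x₄ x₃ x₂ x₁).trans_eq ?_)
  rw [dyadicPreDist_comm x₄ x₃, dyadicPreDist_comm x₃ x₂, dyadicPreDist_comm x₂ x₁]
  ac_rfl

theorem PseudoMetricSpace.dist_ofPreNNDist_mul_left (d : G → G → ℝ≥0)
    (dist_self : ∀ x, d x x = 0) (dist_comm : ∀ x y, d x y = d y x)
    (hd : ∀ h x y, d (h * x) (h * y) = d x y) (h x y : G) :
    @dist G (PseudoMetricSpace.ofPreNNDist d dist_self dist_comm).toDist (h * x) (h * y) =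
      @dist G (PseudoMetricSpace.ofPreNNDist d dist_self dist_comm).toDist x y := by
  simp only [PseudoMetricSpace.dist_ofPreNNDist]
  congr 1
  rw [← (List.map_surjective_iff.2 (mul_left_surjective h)).iInf_comp]
  refine iInf_congr fun l => ?_
  have hmap : ∀ l₁ l₂ : List G,
      List.zipWith d (l₁.map (h * ·)) (l₂.map (h * ·)) = List.zipWith d l₁ l₂ := by
    intro l₁ l₂
    simp [List.zipWith_map, hd]
  simpa using congrArg List.sum (hmap (x :: l) (l ++ [y]))

variable (G) [TopologicalSpace G] [IsTopologicalGroup G]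

theorem IsTopologicalGroup.exists_antitone_basis_nhds_one_mul_mul [FirstCountableTopology G] :
    ∃ W : ℕ → Set G,
      (𝓝 1).HasAntitoneBasis W ∧ ∀ n, W (n + 1) * W (n + 1) * W (n + 1) ⊆ W n := by
  obtain ⟨u, hu, hmul⟩ := IsTopologicalGroup.exists_antitone_basis_nhds_one G
  refine ⟨fun n => u (2 * n), hu.comp_strictMono (strictMono_mul_left_of_pos two_pos),
    fun n => ?_⟩
  have h : 2 * (n + 1) = 2 * n + 1 + 1 := by ring
  simp only [h]
  calc u (2 * n + 1 + 1) * u (2 * n + 1 + 1) * u (2 * n + 1 + 1)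
      ⊆ u (2 * n + 1) * u (2 * n + 1) :=
        Set.mul_subset_mul (hmul _) (hu.antitone (Nat.le_succ _))
    _ ⊆ u (2 * n) := hmul _

theorem exists_isCompatibleLeftInvariantMetric [FirstCountableTopology G] [T1Space G] :
    ∃ d : G → G → ℝ, IsCompatibleLeftInvariantMetric G d := by
  obtain ⟨W, hW, hW3⟩ := IsTopologicalGroup.exists_antitone_basis_nhds_one_mul_mul G
  have hself : ∀ x, dyadicPreDist W x x = 0 := fun x => by
    simp [dyadicPreDist, dyadicWeight_eq_zero fun n => mem_of_mem_nhds (hW.mem n)]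
  set I := PseudoMetricSpace.ofPreNNDist (dyadicPreDist W) hself dyadicPreDist_comm
  have hupper : ∀ x y, @dist G I.toDist x y ≤ dyadicPreDist W x y :=
    PseudoMetricSpace.dist_ofPreNNDist_le _ _ _
  have hlower : ∀ x y, (dyadicPreDist W x y : ℝ) ≤ 2 * @dist G I.toDist x y :=
    PseudoMetricSpace.le_two_mul_dist_ofPreNNDist _ _ _ (dyadicPreDist_le hW.antitone hW3)
  have hlt : ∀ g n, (dyadicPreDist W 1 g : ℝ) < (1 / 2) ^ n ↔ g ∈ W n ∧ g⁻¹ ∈ W n :=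
    fun g n => by exact_mod_cast dyadicPreDist_one_lt_iff hW.antitone
  refine ⟨@dist G I.toDist, .of_hasBasis
    ⟨fun x y => ⟨fun h => ?_, fun h => h ▸ @dist_self G I x⟩, @dist_comm G I, @dist_triangle G I⟩
    (PseudoMetricSpace.dist_ofPreNNDist_mul_left _ _ _ dyadicPreDist_mul_left) ?_⟩
  · have hx : ∀ n, x⁻¹ * y ∈ W n := fun n => by
      refine ((hlt _ n).1 ?_).1
      calc (dyadicPreDist W 1 (x⁻¹ * y) : ℝ) = dyadicPreDist W x y := by
            rw [← dyadicPreDist_mul_left x⁻¹ x y, inv_mul_cancel]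
        _ ≤ 2 * @dist G I.toDist x y := hlower x y
        _ < (1 / 2) ^ n := by rw [h, mul_zero]; positivity
    by_contra hxy
    obtain ⟨n, -, hn⟩ := hW.toHasBasis.mem_iff.1
      (compl_singleton_mem_nhds (Ne.symm (mt inv_mul_eq_one.1 hxy)))
    exact hn (hx n) rfl
  · refine hW.toHasBasis.to_hasBasis' (fun n _ => ⟨(1 / 2) ^ (n + 1), by positivity,
      fun g (hg : @dist G I.toDist 1 g < _) => ((hlt g n).1 ?_).1⟩) fun ε hε => ?_
    · linarith [hlower 1 g, pow_succ (1 / 2 : ℝ) n]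
    obtain ⟨n, hn⟩ := exists_pow_lt_of_lt_one hε (by norm_num : (1 / 2 : ℝ) < 1)
    exact mem_of_superset (inter_mem (hW.mem n) (inv_mem_nhds_one G (hW.mem n)))
      fun g hg => (hupper 1 g).trans_lt (((hlt g n).2 hg).trans hn)

end BirkhoffKakutani

section WordSeminorm

variable {G : Type*} [Group G] (w : GroupSeminorm G) (V : Set G)

noncomputable def wordLength (g : G) : ℝ :=
  sInf ((fun L : List G => (L.map w).sum) ''
    {L | (∀ v ∈ L, v ∈ V ∪ V⁻¹) ∧ L.prod = g})

variable {w V}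

theorem wordLength_le_sum {L : List G} (hL : ∀ v ∈ L, v ∈ V ∪ V⁻¹) :
    wordLength w V L.prod ≤ (L.map w).sum :=
  csInf_le ⟨0, Set.forall_mem_image.2 fun _ _ => List.sum_nonneg (by simp [apply_nonneg])⟩
    (Set.mem_image_of_mem _ ⟨hL, rfl⟩)

theorem le_wordLength (hV : Subgroup.closure V = ⊤) {g : G} {r : ℝ}
    (h : ∀ L : List G, (∀ v ∈ L, v ∈ V ∪ V⁻¹) → L.prod = g → r ≤ (L.map w).sum) :
    r ≤ wordLength w V g := by
  have hg : g ∈ (Subgroup.closure V).toSubmonoid := hV ▸ Subgroup.mem_top g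
  rw [Subgroup.closure_toSubmonoid] at hg
  obtain ⟨L, hL, rfl⟩ := Submonoid.exists_list_of_mem_closure hg
  exact le_csInf ⟨_, Set.mem_image_of_mem _ ⟨hL, rfl⟩⟩
    (Set.forall_mem_image.2 fun L hL => h L hL.1 hL.2)

theorem wordLength_inv_le (hV : Subgroup.closure V = ⊤) (g : G) :
    wordLength w V g⁻¹ ≤ wordLength w V g := by
  refine le_wordLength hV fun L hL hLg => ?_
  have hL' : ∀ v ∈ (L.map (·⁻¹)).reverse, v ∈ V ∪ V⁻¹ := by
    simp only [List.mem_reverse, List.mem_map]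
    rintro _ ⟨u, hu, rfl⟩
    simpa [or_comm] using hL u hu
  have := wordLength_le_sum (w := w) hL'
  rwa [← List.prod_inv_reverse, hLg, List.map_reverse, List.sum_reverse, List.map_map,
    show w ∘ (·⁻¹) = w from funext (map_inv_eq_map w)] at this

/-- The largest group seminorm bounded by `w` on `V`. -/
noncomputable def wordSeminorm (w : GroupSeminorm G) {V : Set G} (hV : Subgroup.closure V = ⊤) :
    GroupSeminorm G where
  toFun := wordLength w V
  map_one' := le_antisymm (wordLength_le_sum (L := []) (by simp))
    (le_wordLength hV fun _ _ _ => List.sum_nonneg (by simp [apply_nonneg]))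
  mul_le' g h := by
    suffices ∀ L : List G, (∀ v ∈ L, v ∈ V ∪ V⁻¹) → L.prod = g →
        wordLength w V (g * h) - wordLength w V h ≤ (L.map w).sum by
      linarith [le_wordLength hV this]
    rintro L hL rfl
    suffices wordLength w V (L.prod * h) - (L.map w).sum ≤ wordLength w V h by linarith
    refine le_wordLength hV fun M hM hMh => ?_
    have := wordLength_le_sum (w := w) (L := L ++ M)
      (by simpa [or_imp, forall_and] using ⟨hL, hM⟩)
    rw [List.prod_append, hMh, List.map_append, List.sum_append] at this
    linarith
  inv' g := le_antisymm (wordLength_inv_le hV g) (by simpa using wordLength_inv_le hV g⁻¹)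

variable (hV : Subgroup.closure V = ⊤)

theorem le_wordSeminorm (g : G) : w g ≤ wordSeminorm w hV g :=
  le_wordLength hV fun L _ hLg => hLg ▸ w.apply_list_prod_le L

theorem wordSeminorm_le {v : G} (hv : v ∈ V) : wordSeminorm w hV v ≤ w v := by
  have := wordLength_le_sum (w := w) (V := V) (L := [v]) (by simp [hv])
  simp only [List.prod_cons, List.prod_nil, mul_one, List.map_cons, List.map_nil, List.sum_cons,
    List.sum_nil, add_zero] at this
  exact this

end WordSeminorm

section MaximalWordMetric

variable {G : Type*} [Group G]

/-- Two adjacent letters of total `w`-weight `< α` merge into a single letter of `S`; otherwise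
their weight is at least `α`, which pays for their `φ`-length `2 C`. -/
theorem GroupSeminorm.apply_mul_list_prod_le (φ w : GroupSeminorm G) {S : Set G} {α C : ℝ}
    (hα : 0 < α) (hball : ∀ g, w g < α → g ∈ S) (hC : ∀ s ∈ S, φ s ≤ C) (L : List G)
    (hL : ∀ v ∈ L, v ∈ S) {a : G} (ha : a ∈ S) :
    φ (a * L.prod) ≤ 2 * C / α * (w a + (L.map w).sum) + C := by
  have h1 : (1 : G) ∈ S := hball 1 (by simpa using hα)
  have hc : 0 ≤ 2 * C / α := by
    have := (map_one_eq_zero φ).symm.le.trans (hC 1 h1)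
    positivity
  induction L generalizing a with
  | nil =>
    simpa using (hC a ha).trans (le_add_of_nonneg_left (mul_nonneg hc (apply_nonneg w a)))
  | cons b L ih =>
    have hL' : ∀ v ∈ L, v ∈ S := fun v hv => hL v (List.mem_cons_of_mem b hv)
    simp only [List.prod_cons, List.map_cons, List.sum_cons]
    by_cases hab : w a + w b < α
    · calc φ (a * (b * L.prod)) = φ (a * b * L.prod) := by rw [mul_assoc]
        _ ≤ 2 * C / α * (w (a * b) + (L.map w).sum) + C :=
          ih hL' (hball _ ((map_mul_le_add w a b).trans_lt hab))
        _ ≤ 2 * C / α * (w a + (w b + (L.map w).sum)) + C := by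
          gcongr 2 * C / α * ?_ + C
          linarith [map_mul_le_add w a b]
    · have hCab : 2 * C ≤ 2 * C / α * (w a + w b) := by
        calc 2 * C = 2 * C / α * α := by field_simp
          _ ≤ 2 * C / α * (w a + w b) := by gcongr; exact not_lt.1 hab
      have hrest := ih hL' h1
      rw [one_mul, map_one_eq_zero, zero_add] at hrest
      calc φ (a * (b * L.prod)) ≤ φ a + (φ b + φ L.prod) :=
            (map_mul_le_add φ _ _).trans (add_le_add le_rfl (map_mul_le_add φ _ _))
        _ ≤ C + (C + (2 * C / α * (L.map w).sum + C)) := by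
          gcongr
          exacts [hC a ha, hC b (hL b List.mem_cons_self)]
        _ ≤ 2 * C / α * (w a + (w b + (L.map w).sum)) + C := by linarith

variable [TopologicalSpace G] {d : G → G → ℝ}

theorem isMaximalMetric_wordSeminorm (hd : IsCompatibleLeftInvariantMetric G d) {U : Set G}
    (hU : U ∈ 𝓝 1) (hOB : HasRelPropOB G U) (hgen : Subgroup.closure U = ⊤) :
    IsMaximalMetric G fun x y => wordSeminorm hd.toGroupSeminorm hgen (x⁻¹ * y) := by
  intro e he
  obtain ⟨α, hα, hball⟩ := hd.hasBasis_nhds_one.mem_iff.1 hU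
  obtain ⟨C, hC⟩ := hasRelPropOB_iff_bddAbove.1 (hOB.union hOB.inv) e he
  have hU1 : (1 : G) ∈ U ∪ U⁻¹ := Or.inl (mem_of_mem_nhds hU)
  have hC0 : 0 ≤ C := (he.1.1 1 1).2 rfl ▸ hC (Set.mem_image_of_mem _ hU1)
  have hc : 0 ≤ 2 * C / α := by positivity
  set K := 2 * C / α + C + 1
  have hK : 0 < K := by positivity
  refine ⟨K, by linarith, fun g f => ?_⟩
  have hword : ∀ L : List G, (∀ v ∈ L, v ∈ U ∪ U⁻¹) → L.prod = g⁻¹ * f →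
      (e g f - K) / K ≤ (L.map hd.toGroupSeminorm).sum := by
    intro L hL hLg
    have := he.toGroupSeminorm.apply_mul_list_prod_le hd.toGroupSeminorm hα
      (fun g hg => Or.inl (hball hg)) (fun s hs => hC (Set.mem_image_of_mem _ hs)) L hL hU1
    rw [one_mul, hLg, ← he.eq_toGroupSeminorm, map_one_eq_zero, zero_add] at this
    have hsum : 0 ≤ (L.map hd.toGroupSeminorm).sum := List.sum_nonneg (by simp [apply_nonneg])
    rw [div_le_iff₀ hK]
    nlinarith [mul_nonneg hC0 hsum]
  have := le_wordLength hgen hword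
  rw [div_le_iff₀ hK] at this
  show e g f ≤ _ * wordLength _ U (g⁻¹ * f) + _
  linarith

theorem HasRelPropOB.exists_one_mem_of_closure_eq_top [IsTopologicalGroup G] {U : Set G}
    (hOB : HasRelPropOB G U) (hUo : IsOpen U) (hgen : Subgroup.closure U = ⊤) :
    ∃ U' : Set G,
      IsOpen U' ∧ (1 : G) ∈ U' ∧ HasRelPropOB G U' ∧ Subgroup.closure U' = ⊤ := by
  rcases U.eq_empty_or_nonempty with rfl | ⟨u, hu⟩
  · refine ⟨Set.univ, isOpen_univ, Set.mem_univ 1, Set.Finite.hasRelPropOB ?_,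
      Subgroup.closure_univ⟩
    rw [Subgroup.closure_empty] at hgen
    exact (Set.finite_singleton 1).subset fun g _ =>
      Subgroup.mem_bot.1 (hgen ▸ Subgroup.mem_top g)
  · exact ⟨U ∪ U⁻¹ * U, hUo.union hUo.mul_left,
      Or.inr ⟨u⁻¹, Set.inv_mem_inv.2 hu, u, hu, inv_mul_cancel u⟩, hOB.union (hOB.inv.mul hOB),
      top_unique (hgen ▸ Subgroup.closure_mono Set.subset_union_left)⟩

theorem exists_isMaximalMetric_of_closure_eq_top [IsTopologicalGroup G]
    [FirstCountableTopology G] [T1Space G] {U : Set G} (hUo : IsOpen U)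
    (hOB : HasRelPropOB G U) (hgen : Subgroup.closure U = ⊤) :
    ∃ d : G → G → ℝ, IsCompatibleLeftInvariantMetric G d ∧ IsMaximalMetric G d := by
  obtain ⟨U, hUo, hU1, hOB, hgen⟩ := hOB.exists_one_mem_of_closure_eq_top hUo hgen
  obtain ⟨d, hd⟩ := exists_isCompatibleLeftInvariantMetric G
  have hU := hUo.mem_nhds hU1
  exact ⟨_, hd.of_groupSeminorm _ (le_wordSeminorm (w := hd.toGroupSeminorm) hgen)
    (eventually_of_mem hU fun _ hg => wordSeminorm_le hgen hg),
    isMaximalMetric_wordSeminorm hd hU hOB hgen⟩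

end MaximalWordMetric

section Separable

variable {G : Type*} [Group G] [TopologicalSpace G] [IsTopologicalGroup G]

theorem Subgroup.iUnion_eq_univ_of_dense {H : ℕ → Subgroup G}
    (hHo : ∀ n, IsOpen (H n : Set G)) (hH : Monotone H) (hdense : Dense (⋃ n, (H n : Set G))) :
    ⋃ n, (H n : Set G) = Set.univ := by
  rw [← Subgroup.coe_iSup_of_directed hH.directed_le] at hdense ⊢
  have hopen : IsOpen ((⨆ n, H n : Subgroup G) : Set G) := by
    rw [Subgroup.coe_iSup_of_directed hH.directed_le]
    exact isOpen_iUnion hHo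
  rw [← (Subgroup.isClosed_of_isOpen _ hopen).closure_eq, hdense.closure_eq]

theorem exists_isOpen_hasRelPropOB_closure_eq_top [TopologicalSpace.SeparableSpace G]
    {W : Set G} (hW : W ∈ 𝓝 1) (hOB : HasRelPropOB G W)
    (hchain : ∀ V : ℕ → Subgroup G, (∀ n, IsOpen (V n : Set G)) → Monotone V →
      ⋃ n, (V n : Set G) = Set.univ → ∃ n, V n = ⊤) :
    ∃ U : Set G, IsOpen U ∧ HasRelPropOB G U ∧ Subgroup.closure U = ⊤ := by
  set x := TopologicalSpace.denseSeq G
  set T : ℕ → Set G := fun n => insert 1 (x '' Set.Iio n)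
  set H : ℕ → Subgroup G := fun n => Subgroup.closure (T n * interior W)
  have hW1 : (1 : G) ∈ interior W := mem_of_mem_nhds (interior_mem_nhds.2 hW)
  have hH : Monotone H := fun m n hmn => Subgroup.closure_mono
    (Set.mul_subset_mul_right
      (Set.insert_subset_insert (Set.image_mono (Set.Iio_subset_Iio hmn))))
  have hHo : ∀ n, IsOpen (H n : Set G) := fun n => (H n).isOpen_of_mem_nhds
    (mem_of_superset (interior_mem_nhds.2 hW)
      ((Set.subset_mul_right _ (Set.mem_insert 1 _)).trans Subgroup.subset_closure))
  have hdense : Dense (⋃ n, (H n : Set G)) := by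
    refine (TopologicalSpace.denseRange_denseSeq G).mono ?_
    rintro _ ⟨i, rfl⟩
    exact Set.mem_iUnion.2 ⟨i + 1, Subgroup.subset_closure
      ⟨x i, Set.mem_insert_of_mem _ ⟨i, Set.mem_Iio.2 (lt_add_one i), rfl⟩, 1, hW1,
        mul_one _⟩⟩
  obtain ⟨N, hN⟩ := hchain H hHo hH (Subgroup.iUnion_eq_univ_of_dense hHo hH hdense)
  exact ⟨T N * interior W, isOpen_interior.mul_left,
    (((Set.finite_Iio N).image x).insert 1).hasRelPropOB.mul (hOB.mono interior_subset), hN⟩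

end Separable

theorem exists_maximal_metric_tfae {G : Type*} [Group G] [TopologicalSpace G]
    [IsTopologicalGroup G] [TopologicalSpace.MetrizableSpace G]
    [TopologicalSpace.SeparableSpace G] :
    List.TFAE
      [ -- (1) G admits a maximal compatible left-invariant metric
        ∃ d : G → G → ℝ, IsCompatibleLeftInvariantMetric G d ∧
          ∀ e : G → G → ℝ, IsCompatibleLeftInvariantMetric G e →
            ∃ K : ℝ, 1 ≤ K ∧ ∀ g f : G, e g f ≤ K * d g f + K,
        -- (2) G is generated by an open set with property (OB) relative to G
        ∃ U : Set G, IsOpen U ∧ HasRelPropOB G U ∧ Subgroup.closure U = ⊤,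
        -- (3) local property (OB) and not a union of a countable chain of
        -- proper open subgroups
        (∃ U ∈ nhds (1 : G), HasRelPropOB G U) ∧
          ¬ ∃ V : ℕ → Subgroup G, (∀ n, IsOpen (V n : Set G)) ∧ (∀ n, V n ≠ ⊤) ∧
            (∀ n, V n ≤ V (n + 1)) ∧ (⋃ n, (V n : Set G)) = Set.univ ] := by
  tfae_have 1 → 3 := by
    rintro ⟨d, hd, hmax : IsMaximalMetric G d⟩
    refine ⟨⟨_, hd.hasBasis_nhds_one.mem_of_mem one_pos,
      hmax.hasRelPropOB ⟨1, Set.forall_mem_image.2 fun _ hg => le_of_lt hg⟩⟩, ?_⟩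
    rintro ⟨V, hVo, hne, hle, hcover⟩
    obtain ⟨n, hn⟩ := hmax.exists_eq_top hd hVo (monotone_nat_of_le_succ hle) hcover
    exact hne n hn
  tfae_have 3 → 2 := fun ⟨⟨W, hW, hOB⟩, hchain⟩ =>
    exists_isOpen_hasRelPropOB_closure_eq_top hW hOB fun V hVo hV hcover => by
      by_contra! hne
      exact hchain ⟨V, hVo, hne, fun n => hV n.le_succ, hcover⟩
  tfae_have 2 → 1 := fun ⟨U, hUo, hOB, hgen⟩ =>
    exists_isMaximalMetric_of_closure_eq_top hUo hOB hgen
  tfae_finish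
end

section
/- Let G be a topological group and d a compatible left-invariant metric on G. Then there exist a real Banach space X, a strongly continuous homomorphism π from G into the group of surjective linear isometries of X (i.e., g ↦ π(g)ξ is continuous for every ξ ∈ X), and a continuous map b: G → X satisfying the cocycle identity b(gf) = π(g)b(f) + b(g) for all g,f ∈ G, such that ‖b(g)‖ = d(g,1) for all g ∈ G. In particular, if d is metrically proper, then b is a metrically proper map from (G,d) to X. -/
open Filter Topology
open scoped Pointwise

/-!
The space is `X`, the bounded real functions on `G` that are uniformly continuous for `d`, with the
sup norm; `G` acts on it by right translation, `(π g ξ) x = ξ (x g)`. Right translation by `g` is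
uniformly continuous for a left-invariant metric because `d (a g) (b g) = d (g⁻¹ (b⁻¹ a) g) 1` and
conjugation is continuous, so `π g` preserves `X`; and `g ↦ π g ξ` is continuous because
`d (x g) (x g') = d g g'`. The cocycle is the coboundary of the unbounded function `ρ = d (·, 1)`,
`b g = π g ρ - ρ`: it is bounded since `|ρ (x g) - ρ x| ≤ d (x g) x = d g 1`, with equality at
`x = 1`, whence `‖b g‖ = d g 1`.
-/

section LeftInvariantMetric

variable {G : Type*} [Group G] [PseudoMetricSpace G] [IsIsometricSMul G G]

theorem dist_inv_mul_one (a b : G) : dist (b⁻¹ * a) 1 = dist a b := by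
  simpa using (dist_mul_left b (b⁻¹ * a) 1).symm

theorem abs_dist_mul_sub_dist_mul_le (x g h : G) :
    |dist (x * g) 1 - dist (x * h) 1| ≤ dist g h := by
  simpa using abs_dist_sub_le (x * g) (x * h) 1

variable [SeparatelyContinuousMul G]

theorem uniformContinuous_mul_right_of_isIsometricSMul (g : G) :
    UniformContinuous (· * g) := by
  have hconj : ContinuousAt (fun c => g⁻¹ * c * g) 1 :=
    ((continuous_mul_const g).comp (continuous_const_mul g⁻¹)).continuousAt
  rw [ContinuousAt, mul_one, inv_mul_cancel, Metric.tendsto_nhds_nhds] at hconj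
  rw [Metric.uniformContinuous_iff]
  intro ε hε
  obtain ⟨δ, hδ, hconj⟩ := hconj ε hε
  refine ⟨δ, hδ, fun {a b} hab => ?_⟩
  convert hconj (x := b⁻¹ * a) (by rwa [dist_inv_mul_one]) using 1
  rw [← dist_inv_mul_one]
  group

theorem uniformContinuous_dist_mul_one_sub (g : G) :
    UniformContinuous fun x : G => dist (x * g) 1 - dist x 1 :=
  ((uniformContinuous_mul_right_of_isIsometricSMul g).dist uniformContinuous_const).sub
    (uniformContinuous_id.dist uniformContinuous_const)

end LeftInvariantMetric

namespace BoundedContinuousFunction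

theorem norm_compContinuous_of_surjective {α β γ : Type*} [TopologicalSpace α]
    [TopologicalSpace γ] [SeminormedAddCommGroup β] (f : α →ᵇ β) {g : C(γ, α)}
    (hg : Function.Surjective g) : ‖f.compContinuous g‖ = ‖f‖ := by
  refine (norm_compContinuous_le f g).antisymm ((norm_le (norm_nonneg _)).2 fun x => ?_)
  obtain ⟨y, rfl⟩ := hg x
  exact (f.compContinuous g).norm_coe_le_norm y

variable (𝕜 α E : Type*) [NormedField 𝕜] [PseudoMetricSpace α] [NormedAddCommGroup E]
  [NormedSpace 𝕜 E]

def uniformlyContinuousSubmodule : Submodule 𝕜 (α →ᵇ E) where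
  carrier := {f | UniformContinuous f}
  zero_mem' := uniformContinuous_const
  add_mem' hf hg := hf.add hg
  smul_mem' c _ hf := hf.const_smul c

variable {𝕜 α E}

theorem isClosed_uniformlyContinuousSubmodule :
    IsClosed (uniformlyContinuousSubmodule 𝕜 α E : Set (α →ᵇ E)) :=
  isClosed_iff_frequently.2 fun _ hf =>
    (tendsto_iff_tendstoUniformly.1 tendsto_id).uniformContinuous hf

end BoundedContinuousFunction

open BoundedContinuousFunction

section RightRegular

variable (𝕜 E : Type*) [NormedField 𝕜] [NormedAddCommGroup E] [NormedSpace 𝕜 E]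
variable {G : Type*} [Group G] [PseudoMetricSpace G] [IsIsometricSMul G G]
  [SeparatelyContinuousMul G]

def rightRegular :
    G →* (uniformlyContinuousSubmodule 𝕜 G E ≃ₗᵢ[𝕜] uniformlyContinuousSubmodule 𝕜 G E) where
  toFun g :=
    { toFun f := ⟨f.1.compContinuous (ContinuousMap.mulRight g),
        f.2.comp (uniformContinuous_mul_right_of_isIsometricSMul g)⟩
      invFun f := ⟨f.1.compContinuous (ContinuousMap.mulRight g⁻¹),
        f.2.comp (uniformContinuous_mul_right_of_isIsometricSMul g⁻¹)⟩
      left_inv f := by ext; simp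
      right_inv f := by ext; simp
      map_add' _ _ := rfl
      map_smul' _ _ := rfl
      norm_map' f := norm_compContinuous_of_surjective f.1 (mul_right_surjective g) }
  map_one' := by ext f x; exact congrArg f.1 (mul_one x)
  map_mul' g h := by ext f x; exact congrArg f.1 (mul_assoc x g h).symm

variable {𝕜 E}

@[simp]
theorem rightRegular_apply_apply (g : G) (f : uniformlyContinuousSubmodule 𝕜 G E) (x : G) :
    (rightRegular 𝕜 E g f : G →ᵇ E) x = f.1 (x * g) := rfl

theorem uniformContinuous_rightRegular_apply (f : uniformlyContinuousSubmodule 𝕜 G E) :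
    UniformContinuous fun g : G => rightRegular 𝕜 E g f := by
  rw [Metric.uniformContinuous_iff_le]
  intro ε hε
  obtain ⟨δ, hδ, hf⟩ := Metric.uniformContinuous_iff_le.1 f.2 ε hε
  refine ⟨δ, hδ, fun g h hgh => (dist_le hε.le).2 fun x => ?_⟩
  exact hf (by simpa using hgh)

end RightRegular

section Cocycle

variable {G : Type*} [Group G] [PseudoMetricSpace G] [IsIsometricSMul G G]
  [SeparatelyContinuousMul G]

def arensEellsCocycle (g : G) : uniformlyContinuousSubmodule ℝ G ℝ :=
  ⟨.ofNormedAddCommGroup _ (uniformContinuous_dist_mul_one_sub g).continuous (dist g 1)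
      fun x => by simpa using abs_dist_mul_sub_dist_mul_le x g 1,
    uniformContinuous_dist_mul_one_sub g⟩

@[simp]
theorem arensEellsCocycle_apply (g x : G) :
    (arensEellsCocycle g : G →ᵇ ℝ) x = dist (x * g) 1 - dist x 1 := rfl

theorem norm_arensEellsCocycle (g : G) : ‖arensEellsCocycle g‖ = dist g 1 := by
  rw [Submodule.coe_norm]
  refine ((norm_le dist_nonneg).2 fun x => ?_).antisymm ?_
  · simpa using abs_dist_mul_sub_dist_mul_le x g 1
  · simpa using (arensEellsCocycle g : G →ᵇ ℝ).norm_coe_le_norm 1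

theorem arensEellsCocycle_mul (g h : G) :
    arensEellsCocycle (g * h) =
      rightRegular ℝ ℝ g (arensEellsCocycle h) + arensEellsCocycle g := by
  ext x
  simp [mul_assoc]

theorem lipschitzWith_arensEellsCocycle : LipschitzWith 1 (arensEellsCocycle (G := G)) :=
  LipschitzWith.of_dist_le_mul fun g h => (dist_le (by positivity)).2 fun x => by
    simpa [Real.dist_eq] using abs_dist_mul_sub_dist_mul_le x g h

end Cocycle

theorem IsCompatibleLeftInvariantMetric.exists_metricSpace {G : Type*} [Group G]
    [τ : TopologicalSpace G] {d : G → G → ℝ} (hd : IsCompatibleLeftInvariantMetric G d) :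
    ∃ m : MetricSpace G, m.toUniformSpace.toTopologicalSpace = τ ∧ m.dist = d := by
  obtain ⟨⟨hzero, hcomm, htri⟩, hnhds, -⟩ := hd
  refine ⟨.ofDistTopology d (fun x => (hzero x x).2 rfl) hcomm htri (fun s => ?_)
    (fun x y => (hzero x y).1), rfl, rfl⟩
  rw [isOpen_iff_mem_nhds]
  exact forall₂_congr fun x _ => hnhds x s

universe u

theorem arens_eells_action {G : Type u} [Group G] [TopologicalSpace G]
    [IsTopologicalGroup G] (d : G → G → ℝ) (hd : IsCompatibleLeftInvariantMetric G d) :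
    ∃ (X : Type u) (_ : NormedAddCommGroup X) (_ : NormedSpace ℝ X) (_ : CompleteSpace X)
      (π : G → X ≃ₗᵢ[ℝ] X) (b : G → X),
      (∀ (g f : G) (ξ : X), π (g * f) ξ = π g (π f ξ)) ∧
      (∀ ξ : X, Continuous fun g : G => π g ξ) ∧
      Continuous b ∧
      (∀ g f : G, b (g * f) = π g (b f) + b g) ∧
      (∀ g : G, ‖b g‖ = d g 1) ∧
      (MetricallyProperMetric G d →
        ∀ B : Set X, (∃ R : ℝ, ∀ ξ ∈ B, ‖ξ‖ ≤ R) →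
          ∃ C : ℝ, ∀ g ∈ b ⁻¹' B, ∀ h ∈ b ⁻¹' B, d g h ≤ C) := by
  obtain ⟨m, rfl, rfl⟩ := hd.exists_metricSpace
  have : IsIsometricSMul G G := ⟨fun h => Isometry.of_dist_eq (hd.2.2 h)⟩
  refine ⟨uniformlyContinuousSubmodule ℝ G ℝ, inferInstance, inferInstance,
    isClosed_uniformlyContinuousSubmodule.completeSpace_coe, rightRegular ℝ ℝ, arensEellsCocycle,
    fun g f ξ => by simp only [map_mul, LinearIsometryEquiv.coe_mul, Function.comp_apply],
    fun ξ => (uniformContinuous_rightRegular_apply ξ).continuous,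
    lipschitzWith_arensEellsCocycle.continuous, arensEellsCocycle_mul, norm_arensEellsCocycle,
    fun _ B ⟨R, hR⟩ => ⟨R + R, fun g hg h hh => ?_⟩⟩
  calc dist g h ≤ dist g 1 + dist h 1 := dist_triangle_right g h 1
    _ ≤ R + R := by
      rw [← norm_arensEellsCocycle g, ← norm_arensEellsCocycle h]
      exact add_le_add (hR _ hg) (hR _ hh)
end
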